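/- Let 1 < p < ∞ with conjugate exponent q, 1/p + 1/q = 1, and define ṽ_{nj} = Σ_{k=j}^{n} a_k B_{kj} for 0 ≤ j ≤ n. A real sequence a = (a_k) belongs to the γ-dual of ℓ_p(P̂) — i.e., the partial sums Σ_{k=0}^{n} a_k x_k are bounded in n for every x ∈ ℓ_p(P̂) — if and only if sup_n Σ_{j=0}^{n} |ṽ_{nj}|^q < ∞. -/

import Mathlib

open Finset Filter Topology

/-- The Pascal fractional difference matrix `P̂ = P̂(τ)`. -/
noncomputable def Phat (τ : ℝ) (n k : ℕ) : ℝ :=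
  if k ≤ n then
    ∑ i ∈ Finset.Icc k n,
      (-1 : ℝ) ^ (i - k) * (n.choose (n - i)) * Real.Gamma (τ + 1) /
        (((i - k).factorial : ℝ) * Real.Gamma (τ - i + k + 1))
  else 0

/-- The matrix `B = B(τ)` (the inverse of `P̂`). -/
noncomputable def Bmat (τ : ℝ) (n k : ℕ) : ℝ :=
  if k ≤ n then
    ∑ j ∈ Finset.Icc k n,
      (-1 : ℝ) ^ (n - k) * (j.choose (j - k)) * Real.Gamma (-τ + 1) /
        (((n - j).factorial : ℝ) * Real.Gamma (-τ - n + j + 1))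
  else 0

/-- The `P̂`-transform of a sequence `x`: `(P̂x)_n = Σ_{k=0}^n P̂_{nk} x_k`. -/
noncomputable def PhatT (τ : ℝ) (x : ℕ → ℝ) (n : ℕ) : ℝ :=
  ∑ k ∈ Finset.range (n + 1), Phat τ n k * x k

/-- The space `ℓ_p(P̂)`: sequences whose `P̂`-transform is in `ℓ_p`. -/
def lpPhatSet (τ p : ℝ) : Set (ℕ → ℝ) :=
  {x | Summable fun n => |PhatT τ x n| ^ p}

/-- The norm of `ℓ_p(P̂)`. -/
noncomputable def lpPhatNorm (τ p : ℝ) (x : ℕ → ℝ) : ℝ :=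
  (∑' n, |PhatT τ x n| ^ p) ^ (1 / p)

open Polynomial


/-- descending Pochhammer evaluated at a real -/
noncomputable def dP (t : ℝ) (n : ℕ) : ℝ := (descPochhammer ℤ n).smeval t

lemma dP_zero (t : ℝ) : dP t 0 = 1 := by simp [dP]

lemma dP_succ (t : ℝ) (n : ℕ) : dP t (n+1) = dP t n * (t - n) := by
  rw [dP, descPochhammer_succ_right, smeval_mul, smeval_sub, smeval_X, smeval_natCast]
  simp [dP]

/-- generalized binomial coefficient -/
noncomputable def gc (t : ℝ) (m : ℕ) : ℝ := Ring.choose t m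

lemma dP_eq_factorial_mul_gc (t : ℝ) (m : ℕ) : dP t m = (m.factorial : ℝ) * gc t m := by
  rw [dP, gc, Ring.descPochhammer_eq_factorial_smul_choose, nsmul_eq_mul]

lemma gc_vandermonde (t : ℝ) (s : ℕ) :
    ∑ ij ∈ Finset.HasAntidiagonal.antidiagonal s, gc t ij.1 * gc (-t) ij.2 = if s = 0 then 1 else 0 := by
  have h := Ring.add_choose_eq (R := ℝ) (r := t) (s := -t) s (Commute.all _ _)
  simp only [add_neg_cancel] at h
  have h0 : Ring.choose (0 : ℝ) s = if s = 0 then 1 else 0 := by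
    have : ((0 : ℕ) : ℝ) = (0 : ℝ) := by norm_cast
    rw [← this, Ring.choose_natCast]
    rcases Nat.eq_zero_or_pos s with hs | hs
    · simp [hs]
    · simp [Nat.choose_eq_zero_of_lt hs, Nat.pos_iff_ne_zero.mp hs]
  simp only [gc]
  rw [← h]
  exact h0

/-- key Gamma identity -/
lemma gamma_ratio {τ : ℝ} (hτ : ∀ z : ℤ, τ ≠ (z : ℝ)) (m : ℕ) :
    Real.Gamma (τ + 1) = dP τ m * Real.Gamma (τ - m + 1) := by
  induction m with
  | zero => simp [dP_zero]
  | succ m ih =>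
    have hne : τ - m ≠ 0 := by
      intro h
      exact hτ m (by push_cast; linarith)
    have : Real.Gamma (τ - m + 1) = (τ - m) * Real.Gamma (τ - m) := Real.Gamma_add_one hne
    rw [ih, this, dP_succ]
    push_cast
    ring_nf

lemma gamma_ne_zero' {τ : ℝ} (hτ : ∀ z : ℤ, τ ≠ (z : ℝ)) (m : ℕ) :
    Real.Gamma (τ - m + 1) ≠ 0 := by
  apply Real.Gamma_ne_zero
  intro n h
  exact hτ (m - 1 - n) (by push_cast; linarith)

/-- The Gamma-quotient equals the generalized binomial coefficient. -/
lemma gamma_quot_eq_gc {τ : ℝ} (hτ : ∀ z : ℤ, τ ≠ (z : ℝ)) (m : ℕ) :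
    Real.Gamma (τ + 1) / ((m.factorial : ℝ) * Real.Gamma (τ - m + 1)) = gc τ m := by
  rw [gamma_ratio hτ m, dP_eq_factorial_mul_gc]
  have h1 : (m.factorial : ℝ) ≠ 0 := by positivity
  have h2 := gamma_ne_zero' hτ m
  field_simp

open Finset

section entries
variable {τ : ℝ} (hτ : ∀ z : ℤ, τ ≠ (z : ℝ))

lemma hτneg {τ : ℝ} (hτ : ∀ z : ℤ, τ ≠ (z : ℝ)) : ∀ z : ℤ, -τ ≠ (z : ℝ) :=
  fun z h => hτ (-z) (by push_cast; linarith)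

lemma Phat_of_gt {n k : ℕ} (h : n < k) : Phat τ n k = 0 := by
  rw [Phat, if_neg (by omega)]

lemma Bmat_of_gt {n k : ℕ} (h : n < k) : Bmat τ n k = 0 := by
  rw [Bmat, if_neg (by omega)]

include hτ in
lemma Phat_entry (n k : ℕ) (hk : k ≤ n) :
    Phat τ n k = ∑ i ∈ Icc k n, (-1 : ℝ) ^ (i - k) * (n.choose (n - i)) * gc τ (i - k) := by
  rw [Phat, if_pos hk]
  refine sum_congr rfl fun i hi => ?_
  have hki : k ≤ i := (mem_Icc.mp hi).1
  have harg : τ - (i : ℝ) + (k : ℝ) + 1 = τ - ((i - k : ℕ) : ℝ) + 1 := by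
    push_cast [Nat.cast_sub hki]; ring
  rw [harg, mul_div_assoc, gamma_quot_eq_gc hτ]

include hτ in
lemma Bmat_entry (n k : ℕ) (hk : k ≤ n) :
    Bmat τ n k = ∑ j ∈ Icc k n, (-1 : ℝ) ^ (n - k) * (j.choose (j - k)) * gc (-τ) (n - j) := by
  rw [Bmat, if_pos hk]
  refine sum_congr rfl fun j hj => ?_
  have hjn : j ≤ n := (mem_Icc.mp hj).2
  have harg : -τ - (n : ℝ) + (j : ℝ) + 1 = -τ - ((n - j : ℕ) : ℝ) + 1 := by
    push_cast [Nat.cast_sub hjn]; ring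
  rw [harg, mul_div_assoc, gamma_quot_eq_gc (hτneg hτ)]

end entries

/-- Pascal matrix entries. -/
noncomputable def Ef (n k : ℕ) : ℝ := if k ≤ n then (n.choose k : ℝ) else 0
/-- inverse Pascal matrix entries. -/
noncomputable def Ff (n k : ℕ) : ℝ := if k ≤ n then (-1 : ℝ) ^ (n - k) * (n.choose k) else 0
/-- fractional difference Toeplitz entries. -/
noncomputable def Df (t : ℝ) (n k : ℕ) : ℝ := if k ≤ n then (-1 : ℝ) ^ (n - k) * gc t (n - k) else 0

lemma sum_fin_eq_sum_Icc {N n k : ℕ} (hn : n < N) (f : ℕ → ℝ)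
    (h1 : ∀ i, i < k → f i = 0) (h2 : ∀ i, n < i → f i = 0) :
    ∑ i : Fin N, f (i : ℕ) = ∑ i ∈ Icc k n, f i := by
  rw [Fin.sum_univ_eq_sum_range]
  refine (Finset.sum_subset (fun x hx => Finset.mem_range.mpr ?_) (fun x hx hx' => ?_)).symm
  · have := mem_Icc.mp hx; omega
  · rcases lt_or_ge x k with h | h
    · exact h1 x h
    · exact h2 x (by simp [mem_Icc, h] at hx'; omega)

lemma entryP {τ : ℝ} (hτ : ∀ z : ℤ, τ ≠ (z : ℝ)) (n k : ℕ) :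
    ∑ i ∈ Icc k n, Ef n i * Df τ i k = Phat τ n k := by
  rcases le_or_gt k n with hk | hk
  · rw [Phat_entry hτ n k hk]
    refine sum_congr rfl fun i hi => ?_
    obtain ⟨h1, h2⟩ := mem_Icc.mp hi
    rw [Ef, if_pos h2, Df, if_pos h1, Nat.choose_symm h2]
    ring
  · rw [Phat_of_gt hk, Icc_eq_empty (by omega), sum_empty]

lemma entryB {τ : ℝ} (hτ : ∀ z : ℤ, τ ≠ (z : ℝ)) (n k : ℕ) :
    ∑ j ∈ Icc k n, Df (-τ) n j * Ff j k = Bmat τ n k := by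
  rcases le_or_gt k n with hk | hk
  · rw [Bmat_entry hτ n k hk]
    refine sum_congr rfl fun j hj => ?_
    obtain ⟨h1, h2⟩ := mem_Icc.mp hj
    rw [Df, if_pos h2, Ff, if_pos h1, Nat.choose_symm h1]
    have : (-1 : ℝ) ^ (n - j) * (-1 : ℝ) ^ (j - k) = (-1 : ℝ) ^ (n - k) := by
      rw [← pow_add]; congr 1; omega
    calc (-1 : ℝ) ^ (n - j) * gc (-τ) (n - j) * ((-1 : ℝ) ^ (j - k) * (j.choose k))
        = ((-1 : ℝ) ^ (n - j) * (-1 : ℝ) ^ (j - k)) * (j.choose k) * gc (-τ) (n - j) := by ring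
      _ = (-1 : ℝ) ^ (n - k) * (j.choose k) * gc (-τ) (n - j) := by rw [this]
  · rw [Bmat_of_gt hk, Icc_eq_empty (by omega), sum_empty]

lemma EF_delta (n k : ℕ) : ∑ j ∈ Icc k n, Ef n j * Ff j k = if n = k then 1 else 0 := by
  rcases le_or_gt k n with hk | hk
  · have : ∀ j ∈ Icc k n, Ef n j * Ff j k
        = (n.choose k : ℝ) * ((-1 : ℝ) ^ (j - k) * ((n - k).choose (j - k) : ℝ)) := by
      intro j hj
      obtain ⟨h1, h2⟩ := mem_Icc.mp hj
      rw [Ef, if_pos h2, Ff, if_pos h1]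
      have hcc : (n.choose j) * (j.choose k) = (n.choose k) * ((n - k).choose (j - k)) :=
        Nat.choose_mul h1
      have : ((n.choose j : ℝ)) * (j.choose k : ℝ) = (n.choose k : ℝ) * ((n - k).choose (j - k) : ℝ) := by
        exact_mod_cast congrArg (Nat.cast : ℕ → ℝ) hcc
      calc (n.choose j : ℝ) * ((-1 : ℝ) ^ (j - k) * (j.choose k))
          = (-1 : ℝ) ^ (j - k) * ((n.choose j : ℝ) * (j.choose k : ℝ)) := by ring
        _ = (-1 : ℝ) ^ (j - k) * ((n.choose k : ℝ) * ((n - k).choose (j - k) : ℝ)) := by rw [this]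
        _ = (n.choose k : ℝ) * ((-1 : ℝ) ^ (j - k) * ((n - k).choose (j - k) : ℝ)) := by ring
    rw [sum_congr rfl this, ← mul_sum]
    have hIcc : Icc k n = Ico k (n + 1) := rfl
    rw [hIcc, Finset.sum_Ico_eq_sum_range]
    have hnk : n + 1 - k = (n - k) + 1 := by omega
    rw [hnk]
    have hterm : ∀ i ∈ range ((n - k) + 1), (-1 : ℝ) ^ ((k + i) - k) * ((n - k).choose ((k + i) - k) : ℝ)
        = (-1 : ℝ) ^ i * ((n - k).choose i : ℝ) := by
      intro i _
      have h : (k + i) - k = i := by omega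
      rw [h]
    rw [sum_congr rfl hterm]
    have halt : ∑ i ∈ range ((n - k) + 1), (-1 : ℝ) ^ i * ((n - k).choose i : ℝ)
        = if n - k = 0 then 1 else 0 := by
      have h := Int.alternating_sum_range_choose (n := n - k)
      have h2 := congrArg (Int.cast : ℤ → ℝ) h
      push_cast at h2
      rw [h2]
    rw [halt]
    rcases eq_or_ne n k with h | h
    · subst h; simp
    · rw [if_neg (by omega), if_neg h, mul_zero]
  · rw [Icc_eq_empty (by omega), sum_empty, if_neg (by omega)]

lemma DD_delta (t : ℝ) (n k : ℕ) :
    ∑ j ∈ Icc k n, Df t n j * Df (-t) j k = if n = k then 1 else 0 := by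
  rcases le_or_gt k n with hk | hk
  · have hstep : ∀ j ∈ Icc k n, Df t n j * Df (-t) j k
        = (-1 : ℝ) ^ (n - k) * (gc t (n - j) * gc (-t) (j - k)) := by
      intro j hj
      obtain ⟨h1, h2⟩ := mem_Icc.mp hj
      rw [Df, if_pos h2, Df, if_pos h1]
      have hsgn : (-1 : ℝ) ^ (n - j) * (-1 : ℝ) ^ (j - k) = (-1 : ℝ) ^ (n - k) := by
        rw [← pow_add]; congr 1; omega
      calc (-1 : ℝ) ^ (n - j) * gc t (n - j) * ((-1 : ℝ) ^ (j - k) * gc (-t) (j - k))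
          = ((-1 : ℝ) ^ (n - j) * (-1 : ℝ) ^ (j - k)) * (gc t (n - j) * gc (-t) (j - k)) := by ring
        _ = (-1 : ℝ) ^ (n - k) * (gc t (n - j) * gc (-t) (j - k)) := by rw [hsgn]
    rw [sum_congr rfl hstep, ← mul_sum]
    have hIcc : Icc k n = Ico k (n + 1) := rfl
    rw [hIcc, Finset.sum_Ico_eq_sum_range]
    have hnk : n + 1 - k = (n - k) + 1 := by omega
    rw [hnk]
    have hterm : ∀ i ∈ range ((n - k) + 1), gc t (n - (k + i)) * gc (-t) ((k + i) - k)
        = gc (-t) i * gc t ((n - k) - i) := by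
      intro i hi
      have h1 : (k + i) - k = i := by omega
      have h2 : n - (k + i) = (n - k) - i := by omega
      rw [h1, h2, mul_comm]
    rw [sum_congr rfl hterm]
    have hvan := gc_vandermonde (-t) (n - k)
    rw [neg_neg] at hvan
    rw [Finset.Nat.sum_antidiagonal_eq_sum_range_succ_mk] at hvan
    simp only at hvan
    rw [hvan]
    rcases eq_or_ne n k with h | h
    · subst h; simp
    · rw [if_neg (by omega), if_neg h, mul_zero]
  · rw [Icc_eq_empty (by omega), sum_empty, if_neg (by omega)]

section matrices
variable {τ : ℝ}

/-- delta identities via finite matrix algebra -/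
lemma PB_delta (hτ : ∀ z : ℤ, τ ≠ (z : ℝ)) (n m : ℕ) :
    ∑ k ∈ Icc m n, Phat τ n k * Bmat τ k m = if n = m then 1 else 0 := by
  rcases le_or_gt m n with hm | hm
  swap
  · rw [Icc_eq_empty (by omega), sum_empty, if_neg (by omega)]
  set N := n + 1 with hN
  let ME : Matrix (Fin N) (Fin N) ℝ := Matrix.of fun i j => Ef (i : ℕ) (j : ℕ)
  let MF : Matrix (Fin N) (Fin N) ℝ := Matrix.of fun i j => Ff (i : ℕ) (j : ℕ)
  let MD : ℝ → Matrix (Fin N) (Fin N) ℝ := fun t => Matrix.of fun i j => Df t (i : ℕ) (j : ℕ)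
  let MP : Matrix (Fin N) (Fin N) ℝ := Matrix.of fun i j => Phat τ (i : ℕ) (j : ℕ)
  let MB : Matrix (Fin N) (Fin N) ℝ := Matrix.of fun i j => Bmat τ (i : ℕ) (j : ℕ)
  have hMP : MP = ME * (MD τ) := by
    ext i j
    simp only [Matrix.mul_apply, MP, ME, MD, Matrix.of_apply]
    rw [sum_fin_eq_sum_Icc (k := (j : ℕ)) (n := (i : ℕ)) i.isLt
      (fun l => Ef (i : ℕ) l * Df τ l (j : ℕ))
      (fun l hl => by rw [Df, if_neg (by omega), mul_zero])
      (fun l hl => by rw [Ef, if_neg (by omega), zero_mul])]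
    exact (entryP hτ _ _).symm
  have hMB : MB = (MD (-τ)) * MF := by
    ext i j
    simp only [Matrix.mul_apply, MB, MF, MD, Matrix.of_apply]
    rw [sum_fin_eq_sum_Icc (k := (j : ℕ)) (n := (i : ℕ)) i.isLt
      (fun l => Df (-τ) (i : ℕ) l * Ff l (j : ℕ))
      (fun l hl => by rw [Ff, if_neg (by omega), mul_zero])
      (fun l hl => by rw [Df, if_neg (by omega), zero_mul])]
    exact (entryB hτ _ _).symm
  have hEF : ME * MF = 1 := by
    ext i j
    simp only [Matrix.mul_apply, ME, MF, Matrix.of_apply]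
    rw [Matrix.one_apply]
    rw [sum_fin_eq_sum_Icc (k := (j : ℕ)) (n := (i : ℕ)) i.isLt
      (fun l => Ef (i : ℕ) l * Ff l (j : ℕ))
      (fun l hl => by rw [Ff, if_neg (by omega), mul_zero])
      (fun l hl => by rw [Ef, if_neg (by omega), zero_mul])]
    rw [EF_delta]
    simp [Fin.ext_iff]
  have hDD : (MD τ) * (MD (-τ)) = 1 := by
    ext i j
    simp only [Matrix.mul_apply, MD, Matrix.of_apply]
    rw [Matrix.one_apply]
    rw [sum_fin_eq_sum_Icc (k := (j : ℕ)) (n := (i : ℕ)) i.isLt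
      (fun l => Df τ (i : ℕ) l * Df (-τ) l (j : ℕ))
      (fun l hl => by
        rw [show Df (-τ) l (j : ℕ) = 0 from by rw [Df, if_neg (by omega)], mul_zero])
      (fun l hl => by
        rw [show Df τ (i : ℕ) l = 0 from by rw [Df, if_neg (by omega)], zero_mul])]
    rw [DD_delta]
    simp [Fin.ext_iff]
  have hPB : MP * MB = 1 := by
    rw [hMP, hMB, mul_assoc, ← mul_assoc (MD τ), hDD, one_mul, hEF]
  have hn : n < N := by omega
  have hm' : m < N := by omega
  have key : (MP * MB) ⟨n, hn⟩ ⟨m, hm'⟩ = (1 : Matrix (Fin N) (Fin N) ℝ) ⟨n, hn⟩ ⟨m, hm'⟩ := by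
    rw [hPB]
  rw [Matrix.mul_apply, Matrix.one_apply] at key
  simp only [MP, MB, Matrix.of_apply, Fin.mk.injEq] at key
  rw [sum_fin_eq_sum_Icc (k := m) (n := n) hn
    (fun l => Phat τ n l * Bmat τ l m)
    (fun l hl => by rw [Bmat_of_gt hl, mul_zero])
    (fun l hl => by rw [Phat_of_gt hl, zero_mul])] at key
  exact key

lemma BP_delta (hτ : ∀ z : ℤ, τ ≠ (z : ℝ)) (n m : ℕ) :
    ∑ k ∈ Icc m n, Bmat τ n k * Phat τ k m = if n = m then 1 else 0 := by
  rcases le_or_gt m n with hm | hm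
  swap
  · rw [Icc_eq_empty (by omega), sum_empty, if_neg (by omega)]
  set N := n + 1 with hN
  let MP : Matrix (Fin N) (Fin N) ℝ := Matrix.of fun i j => Phat τ (i : ℕ) (j : ℕ)
  let MB : Matrix (Fin N) (Fin N) ℝ := Matrix.of fun i j => Bmat τ (i : ℕ) (j : ℕ)
  have hPB : MP * MB = 1 := by
    ext i j
    simp only [Matrix.mul_apply, MP, MB, Matrix.of_apply]
    rw [Matrix.one_apply]
    rw [sum_fin_eq_sum_Icc (k := (j : ℕ)) (n := (i : ℕ)) i.isLt
      (fun l => Phat τ (i : ℕ) l * Bmat τ l (j : ℕ))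
      (fun l hl => by rw [Bmat_of_gt hl, mul_zero])
      (fun l hl => by rw [Phat_of_gt hl, zero_mul])]
    rw [PB_delta hτ]
    simp [Fin.ext_iff]
  have hBP : MB * MP = 1 := mul_eq_one_comm.mp hPB
  have hn : n < N := by omega
  have hm' : m < N := by omega
  have key : (MB * MP) ⟨n, hn⟩ ⟨m, hm'⟩ = (1 : Matrix (Fin N) (Fin N) ℝ) ⟨n, hn⟩ ⟨m, hm'⟩ := by
    rw [hBP]
  rw [Matrix.mul_apply, Matrix.one_apply] at key
  simp only [MP, MB, Matrix.of_apply, Fin.mk.injEq] at key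
  rw [sum_fin_eq_sum_Icc (k := m) (n := n) hn
    (fun l => Bmat τ n l * Phat τ l m)
    (fun l hl => by rw [Phat_of_gt hl, mul_zero])
    (fun l hl => by rw [Bmat_of_gt hl, zero_mul])] at key
  exact key

end matrices

lemma swap_sum (F : ℕ → ℕ → ℝ) (n : ℕ) :
    ∑ k ∈ range (n+1), ∑ j ∈ range (k+1), F k j
      = ∑ j ∈ range (n+1), ∑ k ∈ Icc j n, F k j :=
  Finset.sum_comm' (by intro k j; simp only [mem_range, mem_Icc]; omega)

lemma delta_sum (n : ℕ) (x : ℕ → ℝ) :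
    ∑ m ∈ range (n+1), (if n = m then 1 else 0) * x m = x n := by
  rw [Finset.sum_eq_single_of_mem n (self_mem_range_succ n)]
  · simp
  · intro m _ hm
    rw [if_neg (Ne.symm hm), zero_mul]

/-- `B (P̂ x) = x`. -/
lemma BPhat_apply {τ : ℝ} (hτ : ∀ z : ℤ, τ ≠ (z : ℝ)) (x : ℕ → ℝ) (k : ℕ) :
    ∑ j ∈ range (k+1), Bmat τ k j * PhatT τ x j = x k := by
  simp only [PhatT, mul_sum]
  rw [swap_sum (fun j m => Bmat τ k j * (Phat τ j m * x m)) k]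
  have : ∀ m ∈ range (k+1),
      ∑ j ∈ Icc m k, Bmat τ k j * (Phat τ j m * x m)
        = (if k = m then 1 else 0) * x m := by
    intro m _
    have h1 : ∑ j ∈ Icc m k, Bmat τ k j * (Phat τ j m * x m)
        = (∑ j ∈ Icc m k, Bmat τ k j * Phat τ j m) * x m := by
      rw [sum_mul]; exact sum_congr rfl fun j _ => by ring
    rw [h1, BP_delta hτ k m]
  rw [sum_congr rfl this, delta_sum]

/-- `P̂ (B y) = y`. -/
lemma PhatB_apply {τ : ℝ} (hτ : ∀ z : ℤ, τ ≠ (z : ℝ)) (y : ℕ → ℝ) (n : ℕ) :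
    PhatT τ (fun k => ∑ j ∈ range (k+1), Bmat τ k j * y j) n = y n := by
  simp only [PhatT, mul_sum]
  rw [swap_sum (fun k j => Phat τ n k * (Bmat τ k j * y j)) n]
  have : ∀ m ∈ range (n+1),
      ∑ k ∈ Icc m n, Phat τ n k * (Bmat τ k m * y m)
        = (if n = m then 1 else 0) * y m := by
    intro m _
    have h1 : ∑ k ∈ Icc m n, Phat τ n k * (Bmat τ k m * y m)
        = (∑ k ∈ Icc m n, Phat τ n k * Bmat τ k m) * y m := by
      rw [sum_mul]; exact sum_congr rfl fun j _ => by ring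
    rw [h1, PB_delta hτ n m]
  rw [sum_congr rfl this, delta_sum]

/-- partial sums in terms of the transformed sequence -/
lemma partial_sum_eq {τ : ℝ} (a y : ℕ → ℝ) (n : ℕ) :
    ∑ k ∈ range (n+1), a k * (∑ j ∈ range (k+1), Bmat τ k j * y j)
      = ∑ j ∈ range (n+1), (∑ k ∈ Icc j n, a k * Bmat τ k j) * y j := by
  simp only [mul_sum]
  rw [swap_sum (fun k j => a k * (Bmat τ k j * y j)) n]
  refine sum_congr rfl fun j _ => ?_
  rw [sum_mul]
  exact sum_congr rfl fun k _ => by ring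

/-- for `1 < p < ∞` with conjugate exponent `q` and
`ṽ_{nj} = Σ_{k=j}^n a_k B_{kj}`, a sequence `a` is in the γ-dual of `ℓ_p(P̂)`
iff `sup_n Σ_{j=0}^n |ṽ_{nj}|^q < ∞`. -/
theorem gamma_dual_characterization (τ : ℝ) (hτ : ∀ z : ℤ, τ ≠ (z : ℝ))
    (p q : ℝ) (hp : 1 < p) (hpq : 1 / p + 1 / q = 1) (a : ℕ → ℝ) :
    (∀ x ∈ lpPhatSet τ p, ∃ C : ℝ, ∀ n,
      |∑ k ∈ Finset.range (n + 1), a k * x k| ≤ C) ↔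
    (∃ C : ℝ, ∀ n, ∑ j ∈ Finset.range (n + 1),
      |∑ k ∈ Finset.Icc j n, a k * Bmat τ k j| ^ q ≤ C) := by
  have hpq' : Real.HolderConjugate p q := Real.holderConjugate_iff.mpr ⟨hp, by rw [← one_div, ← one_div]; exact hpq⟩
  have hq1 : 1 < q := hpq'.symm.lt
  set v : ℕ → ℕ → ℝ := fun n j => ∑ k ∈ Icc j n, a k * Bmat τ k j with hv
  constructor
  · intro H
    have hp0 : (0:ℝ) < p := by linarith
    have hq0 : (0:ℝ) < q := by linarith
    have hqp : (q - 1) * p = q := hpq'.symm.sub_one_mul_conj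
    set P : ENNReal := ENNReal.ofReal p with hP
    have hPtR : P.toReal = p := ENNReal.toReal_ofReal hp0.le
    haveI : Fact (1 ≤ P) := ⟨by
      rw [hP, ← ENNReal.ofReal_one]; exact ENNReal.ofReal_le_ofReal hp.le⟩
    have hPne : P ≠ 0 := by
      rw [hP, Ne, ENNReal.ofReal_eq_zero]; push_neg; exact hp0
    have hPtpos : 0 < P.toReal := by rw [hPtR]; exact hp0
    have hbound : ∀ (n : ℕ) (y : lp (fun _ : ℕ => ℝ) P),
        |∑ j ∈ range (n+1), v n j * y j| ≤ (∑ j ∈ range (n+1), |v n j|) * ‖y‖ := by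
      intro n y
      calc |∑ j ∈ range (n+1), v n j * y j|
          ≤ ∑ j ∈ range (n+1), |v n j * y j| := abs_sum_le_sum_abs _ _
        _ = ∑ j ∈ range (n+1), |v n j| * |y j| := sum_congr rfl fun j _ => abs_mul _ _
        _ ≤ ∑ j ∈ range (n+1), |v n j| * ‖y‖ := by
            refine sum_le_sum fun j _ => mul_le_mul_of_nonneg_left ?_ (abs_nonneg _)
            have := lp.norm_apply_le_norm hPne y j
            rwa [Real.norm_eq_abs] at this
        _ = (∑ j ∈ range (n+1), |v n j|) * ‖y‖ := (sum_mul _ _ _).symm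
    let T : ℕ → lp (fun _ : ℕ => ℝ) P →L[ℝ] ℝ := fun n =>
      LinearMap.mkContinuous
        { toFun := fun y => ∑ j ∈ range (n+1), v n j * y j
          map_add' := by
            intro y z
            simp only [lp.coeFn_add, Pi.add_apply, mul_add, sum_add_distrib]
          map_smul' := by
            intro c y
            simp only [lp.coeFn_smul, Pi.smul_apply, smul_eq_mul, RingHom.id_apply, mul_sum]
            exact sum_congr rfl fun j _ => by ring }
        (∑ j ∈ range (n+1), |v n j|)
        (fun y => by
          rw [Real.norm_eq_abs]
          exact hbound n y)
    have hTapp : ∀ n (y : lp (fun _ : ℕ => ℝ) P),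
        T n y = ∑ j ∈ range (n+1), v n j * y j := fun n y => rfl
    have hpt : ∀ y : lp (fun _ : ℕ => ℝ) P, ∃ C, ∀ n, ‖T n y‖ ≤ C := by
      intro y
      have hsum : Summable fun i => |(y : ℕ → ℝ) i| ^ p := by
        have := (memℓp_gen_iff hPtpos).mp (lp.memℓp y)
        simpa [Real.norm_eq_abs, hPtR] using this
      have hxmem : (fun k => ∑ j ∈ range (k+1), Bmat τ k j * y j) ∈ lpPhatSet τ p := by
        simp only [lpPhatSet, Set.mem_setOf_eq]
        refine hsum.congr fun m => ?_
        rw [PhatB_apply hτ (⇑y) m]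
      obtain ⟨C, hC⟩ := H _ hxmem
      refine ⟨C, fun n => ?_⟩
      rw [hTapp, Real.norm_eq_abs]
      have h2 := hC n
      rw [partial_sum_eq a (⇑y) n] at h2
      exact h2
    obtain ⟨C', hC'⟩ := banach_steinhaus hpt
    have hC'nn : 0 ≤ C' := le_trans (norm_nonneg (T 0)) (hC' 0)
    refine ⟨C' ^ q, fun n => ?_⟩
    set S := ∑ j ∈ range (n+1), |v n j| ^ q with hS
    have hSnn : 0 ≤ S := sum_nonneg fun j _ => Real.rpow_nonneg (abs_nonneg _) _
    -- test vector
    set z : ℕ → ℝ := fun j => if j < n+1 then |v n j| ^ (q-2) * v n j else 0 with hzdef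
    have term_eq : ∀ w : ℝ, w * (|w| ^ (q-2) * w) = |w| ^ q := by
      intro w
      rcases eq_or_ne w 0 with hw | hw
      · rw [hw]; simp [Real.zero_rpow (by linarith : q ≠ 0)]
      · have hw' : (0:ℝ) < |w| := abs_pos.mpr hw
        calc w * (|w| ^ (q-2) * w) = |w| ^ (q-2) * (w * w) := by ring
          _ = |w| ^ (q-2) * (|w| * |w|) := by rw [abs_mul_abs_self]
          _ = |w| ^ (q-2) * (|w| ^ (1:ℝ) * |w| ^ (1:ℝ)) := by rw [Real.rpow_one]
          _ = |w| ^ (q-2+1+1) := by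
              rw [← Real.rpow_add hw', ← Real.rpow_add hw']; ring_nf
          _ = |w| ^ q := by ring_nf
    have znorm_eq : ∀ w : ℝ, (|(|w| ^ (q-2) * w)|) ^ p = |w| ^ q := by
      intro w
      rcases eq_or_ne w 0 with hw | hw
      · rw [hw]
        simp [Real.zero_rpow (by linarith : p ≠ 0), Real.zero_rpow (by linarith : q ≠ 0)]
      · have hw' : (0:ℝ) < |w| := abs_pos.mpr hw
        have h1 : |(|w| ^ (q-2) * w)| = |w| ^ (q-1) := by
          rw [abs_mul, abs_of_nonneg (Real.rpow_nonneg (abs_nonneg w) _),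
            ← Real.rpow_add_one hw'.ne' (q-2), show q - 2 + 1 = q - 1 by ring]
        rw [h1, ← Real.rpow_mul (abs_nonneg w), hqp]
    have hzmem : Memℓp z P := by
      apply memℓp_gen
      apply summable_of_ne_finset_zero (s := range (n+1))
      intro i hi
      have hz0 : z i = 0 := by
        simp only [hzdef]
        rw [if_neg (by simpa using hi)]
      rw [hz0]
      simp [Real.zero_rpow (by rw [hPtR]; linarith : P.toReal ≠ 0)]
    set Y : lp (fun _ : ℕ => ℝ) P := ⟨z, hzmem⟩ with hY
    have hYcoe : ∀ j, (Y : ℕ → ℝ) j = z j := fun j => rfl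
    have hTY : T n Y = S := by
      rw [hTapp, hS]
      refine sum_congr rfl fun j hj => ?_
      rw [hYcoe j]
      simp only [hzdef]
      rw [if_pos (mem_range.mp hj)]
      exact term_eq (v n j)
    have hYnorm : ‖Y‖ = S ^ (1/p) := by
      rw [lp.norm_eq_tsum_rpow hPtpos, hPtR]
      congr 1
      rw [tsum_eq_sum (s := range (n+1))
        (fun i hi => by
          rw [hYcoe i]
          simp only [hzdef]
          rw [if_neg (by simpa using hi)]
          simp [Real.zero_rpow (by linarith : p ≠ 0)])]
      refine sum_congr rfl fun j hj => ?_
      rw [hYcoe j]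
      simp only [hzdef]
      rw [if_pos (mem_range.mp hj), Real.norm_eq_abs]
      exact znorm_eq (v n j)
    have hSle : S ≤ C' * S ^ (1/p) := by
      calc S = T n Y := hTY.symm
        _ ≤ |T n Y| := le_abs_self _
        _ ≤ ‖T n‖ * ‖Y‖ := by rw [← Real.norm_eq_abs]; exact (T n).le_opNorm Y
        _ ≤ C' * ‖Y‖ := mul_le_mul_of_nonneg_right (hC' n) (norm_nonneg _)
        _ = C' * S ^ (1/p) := by rw [hYnorm]
    rcases eq_or_lt_of_le hSnn with h0 | hSpos
    · rw [← h0]; exact Real.rpow_nonneg hC'nn q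
    · have hSp := Real.rpow_pos_of_pos hSpos (1/p)
      have h2 : S ^ (1/q) * S ^ (1/p) ≤ C' * S ^ (1/p) := by
        calc S ^ (1/q) * S ^ (1/p) = S ^ (1/q + 1/p) := (Real.rpow_add hSpos _ _).symm
          _ = S := by rw [show 1/q + 1/p = 1 by linarith, Real.rpow_one]
          _ ≤ C' * S ^ (1/p) := hSle
      have h3 : S ^ (1/q) ≤ C' := le_of_mul_le_mul_right h2 hSp
      calc S = (S ^ (1/q)) ^ q := by
            rw [← Real.rpow_mul hSnn, one_div_mul_cancel (by linarith : q ≠ 0), Real.rpow_one]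
        _ ≤ C' ^ q := Real.rpow_le_rpow (Real.rpow_nonneg hSnn _) h3 hq0.le

  · -- easy direction: Hölder
    rintro ⟨C, hC⟩ x hx
    set y : ℕ → ℝ := PhatT τ x with hy
    have hxk : ∀ k, x k = ∑ j ∈ range (k + 1), Bmat τ k j * y j :=
      fun k => (BPhat_apply hτ x k).symm
    refine ⟨(max C 0) ^ (1/q) * (∑' n, |y n| ^ p) ^ (1/p), fun n => ?_⟩
    have hps : ∑ k ∈ range (n + 1), a k * x k = ∑ j ∈ range (n + 1), v n j * y j := by
      calc ∑ k ∈ range (n + 1), a k * x k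
          = ∑ k ∈ range (n + 1), a k * (∑ j ∈ range (k + 1), Bmat τ k j * y j) := by
            exact sum_congr rfl fun k _ => by rw [← hxk k]
        _ = ∑ j ∈ range (n + 1), v n j * y j := partial_sum_eq a y n
    rw [hps]
    have h1 : |∑ j ∈ range (n + 1), v n j * y j| ≤ ∑ j ∈ range (n + 1), |v n j| * |y j| := by
      refine (Finset.abs_sum_le_sum_abs _ _).trans ?_
      exact le_of_eq (sum_congr rfl fun j _ => abs_mul _ _)
    have h2 : ∑ j ∈ range (n + 1), |v n j| * |y j|
        ≤ (∑ j ∈ range (n + 1), |(|v n j|)| ^ q) ^ (1/q)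
          * (∑ j ∈ range (n + 1), |(|y j|)| ^ p) ^ (1/p) :=
      Real.inner_le_Lp_mul_Lq (range (n + 1)) _ _ hpq'.symm
    simp only [abs_abs] at h2
    refine h1.trans (h2.trans ?_)
    have hA : (∑ j ∈ range (n + 1), |v n j| ^ q) ^ (1/q) ≤ (max C 0) ^ (1/q) := by
      apply Real.rpow_le_rpow
      · exact sum_nonneg fun j _ => Real.rpow_nonneg (abs_nonneg _) _
      · exact le_max_of_le_left (hC n)
      · exact (one_div_pos.mpr (by linarith)).le
    have hB : (∑ j ∈ range (n + 1), |y j| ^ p) ^ (1/p) ≤ (∑' m, |y m| ^ p) ^ (1/p) := by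
      apply Real.rpow_le_rpow
      · exact sum_nonneg fun j _ => Real.rpow_nonneg (abs_nonneg _) _
      · exact Summable.sum_le_tsum _ (fun m _ => Real.rpow_nonneg (abs_nonneg _) _) hx
      · positivity
    have hBnn : 0 ≤ (∑ j ∈ range (n + 1), |y j| ^ p) ^ (1/p) := by positivity
    have hAnn : 0 ≤ (∑ j ∈ range (n + 1), |v n j| ^ q) ^ (1/q) := by positivity
    exact mul_le_mul hA hB hBnn (by positivity)
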